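/- arXiv:1304.1771 — 5 statements merged into one kernel-verified Lean document; each statement's English description precedes it below -/
import Mathlib

section
/- Let γ = arccos(1/3) and θ₃ = 2π/3. Then 2·arctan( √(cos²(γ/2) − cos²(θ₃/2)) / cos(θ₃/2) ) = 2π/3 − arccos((3φ−1)/4), where φ = (1+√5)/2. -/
/-!
With `cos γ = 1/3` and `cos (θ₃/2) = 1/2`, the argument of the arctangent is `t = √(5/3)`, and
`cos (2 arctan t) = (1 - t²)/(1 + t²) = -1/4`, so the left-hand side is `arccos (-1/4)`.
Since `(3φ - 1)/4 = (1 + 3√5)/8 = cos (2π/3) · (-1/4) + sin (2π/3) · √15/4`, the angle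
`2π/3 - arccos (-1/4)` has cosine `(3φ - 1)/4`, and it lies in `[0, π]` because
`arccos (-1/4) ≤ arccos (-1/2) = 2π/3`.
-/

open Real

namespace Real

lemma cos_sq_half (x : ℝ) : cos (x / 2) ^ 2 = 1 / 2 + cos x / 2 := by
  rw [cos_sq, mul_div_cancel₀ x two_ne_zero]

lemma cos_sq_half_arccos {x : ℝ} (hx₁ : -1 ≤ x) (hx₂ : x ≤ 1) :
    cos (arccos x / 2) ^ 2 = (1 + x) / 2 := by
  rw [cos_sq_half, cos_arccos hx₁ hx₂]
  ring

lemma cos_two_mul_arctan (t : ℝ) : cos (2 * arctan t) = (1 - t ^ 2) / (1 + t ^ 2) := by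
  have hpos : (0 : ℝ) < 1 + t ^ 2 := by positivity
  rw [cos_two_mul, cos_arctan, div_pow, one_pow, sq_sqrt hpos.le]
  field_simp
  ring

lemma two_mul_arctan_eq_arccos {t : ℝ} (ht : 0 ≤ t) :
    2 * arctan t = arccos ((1 - t ^ 2) / (1 + t ^ 2)) := by
  have h₀ : 0 ≤ arctan t := arctan_nonneg.mpr ht
  refine (arccos_eq_of_eq_cos (by linarith) ?_ (cos_two_mul_arctan t).symm).symm
  linarith [arctan_lt_pi_div_two t]

lemma arccos_neg_one_half : arccos (-(1 / 2)) = 2 * π / 3 := by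
  rw [arccos_neg, ← cos_pi_div_three, arccos_cos (by positivity) (by linarith [pi_pos])]
  ring

lemma cos_two_pi_div_three_sub_arccos_neg_one_fourth :
    cos (2 * π / 3 - arccos (-(1 / 4))) = (1 + 3 * √5) / 8 := by
  have hcos : cos (2 * π / 3) = -(1 / 2) := by
    rw [← arccos_neg_one_half, cos_arccos (by norm_num) (by norm_num)]
  have hsin : sin (2 * π / 3) = √3 / 2 := by
    rw [show 2 * π / 3 = π - π / 3 by ring, sin_pi_sub, sin_pi_div_three]
  have hsqrt : √3 * √(1 - (-(1 / 4)) ^ 2) = 3 / 4 * √5 := by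
    rw [← sqrt_mul (by norm_num), show (3 : ℝ) * (1 - (-(1 / 4)) ^ 2) = (3 / 4) ^ 2 * 5 by norm_num,
      sqrt_mul (by positivity), sqrt_sq (by norm_num)]
  rw [cos_sub, hcos, hsin, cos_arccos (by norm_num) (by norm_num), sin_arccos]
  linear_combination hsqrt / 2

lemma arccos_neg_one_fourth_add_arccos :
    arccos (-(1 / 4)) + arccos ((1 + 3 * √5) / 8) = 2 * π / 3 := by
  have hle : arccos (-(1 / 4)) ≤ 2 * π / 3 :=
    arccos_neg_one_half ▸ arccos_le_arccos (by norm_num)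
  rw [← cos_two_pi_div_three_sub_arccos_neg_one_fourth,
    arccos_cos (by linarith) (by linarith [arccos_nonneg (-(1 / 4)), pi_pos])]
  ring

end Real

theorem stmt3 (γ θ₃ φ : ℝ) (hγ : γ = Real.arccos (1 / 3))
    (hθ : θ₃ = 2 * Real.pi / 3) (hφ : φ = (1 + Real.sqrt 5) / 2) :
    2 * Real.arctan (Real.sqrt (Real.cos (γ / 2) ^ 2 - Real.cos (θ₃ / 2) ^ 2)
        / Real.cos (θ₃ / 2))
      = 2 * Real.pi / 3 - Real.arccos ((3 * φ - 1) / 4) := by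
  have hcosγ : cos (γ / 2) ^ 2 = 2 / 3 := by
    rw [hγ, cos_sq_half_arccos (by norm_num) (by norm_num)]
    norm_num
  have hcosθ : cos (θ₃ / 2) = 1 / 2 := by
    rw [hθ, show 2 * π / 3 / 2 = π / 3 by ring, cos_pi_div_three]
  set t := √(cos (γ / 2) ^ 2 - cos (θ₃ / 2) ^ 2) / cos (θ₃ / 2) with ht
  have ht_nonneg : 0 ≤ t := by rw [ht, hcosθ]; positivity
  have ht_sq : t ^ 2 = 5 / 3 := by
    rw [ht, div_pow, sq_sqrt (by rw [hcosγ, hcosθ]; norm_num), hcosγ, hcosθ]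
    norm_num
  have hφ' : (3 * φ - 1) / 4 = (1 + 3 * √5) / 8 := by rw [hφ]; ring
  rw [two_mul_arctan_eq_arccos ht_nonneg, ht_sq, hφ', ← arccos_neg_one_fourth_add_arccos]
  norm_num
end

section
/- Let γ = arccos(1/3), θ₅ = 2π/5, and φ = (1+√5)/2. Then arctan( √(cos²(γ/2) − cos²(θ₅/2)) / (sin(γ/2)·cos(θ₅/2)) ) = arccos( φ² / √(2(φ+2)) ). -/
/-!
Both sides equal `arctan (√5 - 2)`. On the left, the half-angle formulas give
`cos² (γ/2) = 2/3` and `sin² (γ/2) = 1/3`, and `cos (π/5) = (1 + √5)/4`; on the right,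
`arccos c = arctan (√(1 - c²)/c)` with `c² = (7 + 3√5)/(2(5 + √5))`. In both cases the
radicand is the square of `(√5 - 2)` times the denominator.
-/

open Real

namespace Real

lemma sqrt_div_eq_of_eq_sq {x d k : ℝ} (hd : 0 < d) (hk : 0 ≤ k) (h : x = (k * d) ^ 2) :
    √x / d = k := by
  rw [h, sqrt_sq (mul_nonneg hk hd.le), mul_div_assoc, div_self hd.ne', mul_one]

lemma cos_half_arccos {x : ℝ} (hx : x ≤ 1) : cos (arccos x / 2) = √((1 + x) / 2) := by
  rcases lt_or_ge x (-1) with hx₁ | hx₁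
  · rw [arccos_of_le_neg_one hx₁.le, cos_pi_div_two, sqrt_eq_zero_of_nonpos (by linarith)]
  · rw [cos_half (by linarith [arccos_nonneg x, pi_pos]) (arccos_le_pi x), cos_arccos hx₁ hx]

lemma sin_half_arccos {x : ℝ} (hx : -1 ≤ x) : sin (arccos x / 2) = √((1 - x) / 2) := by
  rcases le_or_gt x 1 with hx₁ | hx₁
  · rw [sin_half_eq_sqrt (arccos_nonneg x) (by linarith [arccos_le_pi x, pi_pos]),
      cos_arccos hx hx₁]
  · rw [arccos_of_one_le hx₁.le, zero_div, sin_zero, sqrt_eq_zero_of_nonpos (by linarith)]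

end Real

lemma arctan_half_dihedral_ratio_eq :
    arctan (√(cos (arccos (1 / 3) / 2) ^ 2 - cos (2 * π / 5 / 2) ^ 2)
        / (sin (arccos (1 / 3) / 2) * cos (2 * π / 5 / 2))) = arctan (√5 - 2) := by
  have h5 : √5 ^ 2 = 5 := sq_sqrt (by norm_num)
  have h5_gt : 2 < √5 := by nlinarith [sqrt_nonneg 5]
  have hθ : cos (2 * π / 5 / 2) = (1 + √5) / 4 := by
    rw [show 2 * π / 5 / 2 = π / 5 by ring, cos_pi_div_five]
  have hsin : sin (arccos (1 / 3) / 2) ^ 2 = 1 / 3 := by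
    rw [sin_half_arccos (by norm_num), sq_sqrt (by norm_num)]; norm_num
  have hsin_pos : 0 < sin (arccos (1 / 3) / 2) := by
    rw [sin_half_arccos (by norm_num)]; positivity
  rw [cos_half_arccos (by norm_num), sq_sqrt (by norm_num), hθ]
  congr 1
  refine sqrt_div_eq_of_eq_sq (by positivity) (by linarith) ?_
  rw [mul_pow, mul_pow, hsin]
  linear_combination (-(√5 ^ 2 - 2 * √5 + 5) / 48) * h5

lemma arccos_golden_sq_div_eq :
    arccos (((1 + √5) / 2) ^ 2 / √(2 * ((1 + √5) / 2 + 2))) = arctan (√5 - 2) := by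
  have h5 : √5 ^ 2 = 5 := sq_sqrt (by norm_num)
  have h5_gt : 2 < √5 := by nlinarith [sqrt_nonneg 5]
  rw [show 2 * ((1 + √5) / 2 + 2) = 5 + √5 by ring]
  set c := ((1 + √5) / 2) ^ 2 / √(5 + √5)
  have hc_pos : 0 < c := div_pos (by positivity) (sqrt_pos.2 (by positivity))
  have hc_sq : c ^ 2 = (7 + 3 * √5) / (2 * (5 + √5)) := by
    rw [div_pow, sq_sqrt (by positivity)]
    field_simp
    linear_combination (√5 ^ 2 + 4 * √5 + 11) * h5
  rw [arccos_eq_arctan hc_pos]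
  congr 1
  refine sqrt_div_eq_of_eq_sq hc_pos (by linarith) ?_
  rw [mul_pow, hc_sq]
  field_simp
  linear_combination (-3 * √5 + 5) * h5

theorem stmt6 (γ θ₅ φ : ℝ) (hγ : γ = Real.arccos (1 / 3))
    (hθ : θ₅ = 2 * Real.pi / 5) (hφ : φ = (1 + Real.sqrt 5) / 2) :
    Real.arctan (Real.sqrt (Real.cos (γ / 2) ^ 2 - Real.cos (θ₅ / 2) ^ 2)
        / (Real.sin (γ / 2) * Real.cos (θ₅ / 2)))
      = Real.arccos (φ ^ 2 / Real.sqrt (2 * (φ + 2))) := by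
  subst hγ hθ hφ
  rw [arctan_half_dihedral_ratio_eq, arccos_golden_sq_div_eq]
end

section
/- Let φ = (1+√5)/2, γ = arccos(1/3), θ₃ = 2π/3, θ₅ = 2π/5, and define βₙ = 2·arctan(√(cos²(γ/2)−cos²(θₙ/2))/cos(θₙ/2)). Then β₃ + β₅ = 2π/3. -/
/-!
The three cosines involved are explicit: `cos² (γ / 2) = 2 / 3`, `cos (π / 3) = 1 / 2` and
`cos (π / 5) = (1 + √5) / 4`. This makes `tan (β₃ / 2) = √5 / √3` and
`tan (β₅ / 2) = (√5 - 2) / √3`, and two tangents `u / √3`, `v / √3` add up to the angle `π / 3`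
exactly when `(1 + u) (1 + v) = 4`, which here is `(1 + √5) (√5 - 1) = 4`.
-/

open Real

lemma cos_half_arccos_sq {x : ℝ} (hx₁ : -1 ≤ x) (hx₂ : x ≤ 1) :
    cos (arccos x / 2) ^ 2 = (1 + x) / 2 := by
  rw [cos_sq, show 2 * (arccos x / 2) = arccos x by ring, cos_arccos hx₁ hx₂]
  ring

lemma sqrt_sub_sq_div_eq {c d t : ℝ} (hd : 0 < d) (ht : 0 ≤ t) (h : c = d ^ 2 * (1 + t ^ 2)) :
    √(c - d ^ 2) / d = t := by
  rw [show c - d ^ 2 = (d * t) ^ 2 by rw [h]; ring, sqrt_sq (by positivity)]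
  field_simp

lemma arctan_div_sqrt_three_add_arctan_div_sqrt_three {u v : ℝ} (huv : u * v < 3)
    (h : (1 + u) * (1 + v) = 4) :
    arctan (u / √3) + arctan (v / √3) = π / 3 := by
  have h3 : √3 ^ 2 = 3 := sq_sqrt (by norm_num)
  have hprod : u / √3 * (v / √3) = u * v / 3 := by
    rw [div_mul_div_comm, ← sq, h3]
  have hlt : u / √3 * (v / √3) < 1 := by
    rw [hprod]; linarith
  have htan : (u / √3 + v / √3) / (1 - u / √3 * (v / √3)) = √3 := by
    rw [hprod, div_eq_iff (by linarith)]
    field_simp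
    linear_combination (u * v - 3) * h3 + 3 * h
  rw [arctan_add hlt, htan, ← tan_pi_div_three,
    arctan_tan (by linarith [pi_pos]) (by linarith [pi_pos])]

theorem stmt13_general (γ θ₃ θ₅ β₃ β₅ : ℝ)
    (hγ : γ = Real.arccos (1 / 3))
    (hθ₃ : θ₃ = 2 * Real.pi / 3) (hθ₅ : θ₅ = 2 * Real.pi / 5)
    (hβ₃ : β₃ = 2 * Real.arctan (Real.sqrt (Real.cos (γ / 2) ^ 2 - Real.cos (θ₃ / 2) ^ 2)
        / Real.cos (θ₃ / 2)))
    (hβ₅ : β₅ = 2 * Real.arctan (Real.sqrt (Real.cos (γ / 2) ^ 2 - Real.cos (θ₅ / 2) ^ 2)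
        / Real.cos (θ₅ / 2))) :
    β₃ + β₅ = 2 * Real.pi / 3 := by
  have h5 : √5 ^ 2 = 5 := sq_sqrt (by norm_num)
  have h3 : √3 ^ 2 = 3 := sq_sqrt (by norm_num)
  have h5gt : 2 < √5 := by nlinarith [sqrt_nonneg 5]
  have hcγ : cos (γ / 2) ^ 2 = 2 / 3 := by
    rw [hγ, cos_half_arccos_sq (by norm_num) (by norm_num)]; norm_num
  have hc₃ : cos (θ₃ / 2) = 1 / 2 := by
    rw [hθ₃, show 2 * π / 3 / 2 = π / 3 by ring, cos_pi_div_three]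
  have hc₅ : cos (θ₅ / 2) = (1 + √5) / 4 := by
    rw [hθ₅, show 2 * π / 5 / 2 = π / 5 by ring, cos_pi_div_five]
  have ht₃ : √(cos (γ / 2) ^ 2 - cos (θ₃ / 2) ^ 2) / cos (θ₃ / 2) = √5 / √3 := by
    rw [hcγ, hc₃]
    refine sqrt_sub_sq_div_eq (by norm_num) (by positivity) ?_
    simp only [div_pow, h5, h3]; norm_num
  have ht₅ : √(cos (γ / 2) ^ 2 - cos (θ₅ / 2) ^ 2) / cos (θ₅ / 2) = (√5 - 2) / √3 := by
    rw [hcγ, hc₅]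
    refine sqrt_sub_sq_div_eq (by positivity) (div_nonneg (by linarith) (sqrt_nonneg 3)) ?_
    simp only [div_pow, h3]
    linear_combination (-√5 ^ 2 + 2 * √5 - 5) / 48 * h5
  have hsum := arctan_div_sqrt_three_add_arctan_div_sqrt_three (u := √5) (v := √5 - 2)
    (by nlinarith) (by linear_combination h5)
  rw [hβ₃, hβ₅, ht₃, ht₅]
  linarith

theorem stmt13 (φ γ θ₃ θ₅ β₃ β₅ : ℝ) (hφ : φ = (1 + Real.sqrt 5) / 2)
    (hγ : γ = Real.arccos (1 / 3))
    (hθ₃ : θ₃ = 2 * Real.pi / 3) (hθ₅ : θ₅ = 2 * Real.pi / 5)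
    (hβ₃ : β₃ = 2 * Real.arctan (Real.sqrt (Real.cos (γ / 2) ^ 2 - Real.cos (θ₃ / 2) ^ 2)
        / Real.cos (θ₃ / 2)))
    (hβ₅ : β₅ = 2 * Real.arctan (Real.sqrt (Real.cos (γ / 2) ^ 2 - Real.cos (θ₅ / 2) ^ 2)
        / Real.cos (θ₅ / 2))) :
    β₃ + β₅ = 2 * Real.pi / 3 :=
  stmt13_general γ θ₃ θ₅ β₃ β₅ hγ hθ₃ hθ₅ hβ₃ hβ₅
end

section
/- Let φ = (1+√5)/2, γ = arccos(1/3), and α₅ = arctan(√(cos²(γ/2)−cos²(π/5))/(sin(γ/2)·cos(π/5))). Then cos α₅ = φ²/√(2(φ+2)) and tan²(α₅) = (2(φ+2) − φ⁴)/φ⁴. -/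
theorem stmt14 (φ γ α₅ : ℝ) (hφ : φ = (1 + Real.sqrt 5) / 2)
    (hγ : γ = Real.arccos (1 / 3))
    (hα : α₅ = Real.arctan (Real.sqrt (Real.cos (γ / 2) ^ 2 - Real.cos (Real.pi / 5) ^ 2)
        / (Real.sin (γ / 2) * Real.cos (Real.pi / 5)))) :
    Real.cos α₅ = φ ^ 2 / Real.sqrt (2 * (φ + 2)) ∧
    Real.tan α₅ ^ 2 = (2 * (φ + 2) - φ ^ 4) / φ ^ 4 := by
  have hs5 : Real.sqrt 5 ^ 2 = 5 := Real.sq_sqrt (by norm_num)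
  have hs5n : (0:ℝ) ≤ Real.sqrt 5 := Real.sqrt_nonneg 5
  have hs5lb : (2:ℝ) ≤ Real.sqrt 5 := by nlinarith
  have hs5ub : Real.sqrt 5 ≤ 7/3 := by nlinarith
  -- cos γ = 1/3
  have hcγ : Real.cos γ = 1/3 := by
    rw [hγ]; exact Real.cos_arccos (by norm_num) (by norm_num)
  have hcos2 : Real.cos (γ/2) ^ 2 = 2/3 := by
    have := Real.cos_sq (γ/2)
    rw [show 2 * (γ/2) = γ by ring, hcγ] at this
    linarith
  have hsin2 : Real.sin (γ/2) ^ 2 = 1/3 := by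
    have := Real.sin_sq_add_cos_sq (γ/2)
    linarith
  have hγ0 : 0 ≤ γ := hγ ▸ Real.arccos_nonneg _
  have hγπ : γ ≤ Real.pi := hγ ▸ Real.arccos_le_pi _
  have hsinpos : 0 < Real.sin (γ/2) := by
    have h := Real.sin_nonneg_of_nonneg_of_le_pi (x := γ/2) (by linarith)
      (by linarith [Real.pi_pos])
    rcases h.lt_or_eq with h | h
    · exact h
    · exfalso; rw [← h] at hsin2; norm_num at hsin2
  have hcos5 : Real.cos (Real.pi / 5) = (1 + Real.sqrt 5) / 4 := Real.cos_pi_div_five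
  set t : ℝ := Real.sqrt (Real.cos (γ / 2) ^ 2 - Real.cos (Real.pi / 5) ^ 2)
      / (Real.sin (γ / 2) * Real.cos (Real.pi / 5)) with ht
  have hA : Real.cos (γ / 2) ^ 2 - Real.cos (Real.pi / 5) ^ 2 = (7 - 3 * Real.sqrt 5)/24 := by
    rw [hcos2, hcos5]; linear_combination (-1/16) * hs5
  have hAnn : (0:ℝ) ≤ (7 - 3 * Real.sqrt 5)/24 := by linarith
  have hc5pos : 0 < Real.cos (Real.pi / 5) := by rw [hcos5]; linarith
  have ht0 : 0 ≤ t := by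
    apply div_nonneg (Real.sqrt_nonneg _)
    positivity
  have ht2 : t ^ 2 = 9 - 4 * Real.sqrt 5 := by
    rw [ht, div_pow, mul_pow, Real.sq_sqrt (hA ▸ hAnn), hA, hsin2, hcos5]
    rw [div_eq_iff (by nlinarith)]
    linear_combination ((4 * Real.sqrt 5 - 1)/48) * hs5
  have hφ2 : φ ^ 2 = φ + 1 := by rw [hφ]; linear_combination (1/4) * hs5
  have hφpos : 0 < φ := by rw [hφ]; linarith
  have hφ4 : φ ^ 4 = 3 * φ + 2 := by linear_combination (φ^2 + φ + 2) * hφ2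
  have h1t : 1 + t ^ 2 = 10 - 4 * Real.sqrt 5 := by rw [ht2]; ring
  constructor
  · rw [hα, Real.cos_arctan]
    have key : 2 * (φ + 2) = φ ^ 4 * (1 + t ^ 2) := by
      rw [h1t, hφ4, hφ]; linear_combination 6 * hs5
    rw [key, show φ ^ 4 = (φ^2)^2 by ring, Real.sqrt_mul (sq_nonneg _),
      Real.sqrt_sq (by positivity)]
    rw [div_mul_eq_div_div, div_self (ne_of_gt (pow_pos hφpos 2))]
  · rw [hα, Real.tan_arctan, ht2, hφ4, eq_div_iff (by positivity), hφ]
    linear_combination (-6) * hs5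
end

section
/- Let φ = (1+√5)/2 and β = arccos((3φ−1)/4). Then β is not a rational multiple of π. -/
/-!
Triple-angle formula: `cos (3β) = 4 cos³ β - 3 cos β = 11/16`, where `√5` cancels.
If `β` were a rational multiple of `π`, so would be `3β`, and by Niven's theorem its rational
cosine would lie in `{-1, -1/2, 0, 1/2, 1}`.
-/

open Real

lemma cos_three_mul_of_cos_eq {x : ℝ} (hx : cos x = (1 + 3 * √5) / 8) :
    cos (3 * x) = 11 / 16 := by
  have hs5 : √5 ^ 2 = 5 := sq_sqrt (by norm_num)
  rw [cos_three_mul, hx]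
  linear_combination (27 * (√5 + 1) / 128) * hs5

lemma not_exists_rat_mul_pi_of_cos_eq {x : ℝ} (hx : cos x = 11 / 16) :
    ¬ ∃ q : ℚ, x = q * π := by
  intro hq
  have := niven hq ⟨11 / 16, by rw [hx]; norm_num⟩
  rw [hx] at this
  norm_num at this

theorem stmt18 (φ β : ℝ) (hφ : φ = (1 + Real.sqrt 5) / 2)
    (hβ : β = Real.arccos ((3 * φ - 1) / 4)) :
    ¬ ∃ q : ℚ, β = (q : ℝ) * Real.pi := by
  have hs5 : √5 ^ 2 = 5 := sq_sqrt (by norm_num)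
  have hs5_nonneg : 0 ≤ √5 := sqrt_nonneg 5
  have hcos : cos β = (1 + 3 * √5) / 8 := by
    rw [hβ, hφ, show (3 * ((1 + √5) / 2) - 1) / 4 = (1 + 3 * √5) / 8 by ring,
      cos_arccos (by nlinarith) (by nlinarith)]
  rintro ⟨q, rfl⟩
  exact not_exists_rat_mul_pi_of_cos_eq (cos_three_mul_of_cos_eq hcos)
    ⟨3 * q, by push_cast; ring⟩
end
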